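/- Let G be a connected graph on vertex set {1,...,n} with n ≥ 2, and let Φ = (F_1,...,F_n) be pairwise disjoint graphs. If I is a minimum total dominating set of some G-layer of G[Φ], then I is a minimum total dominating set of G[Φ]; in particular, γ_t(G) = γ_t(G[Φ]). -/

import Mathlib

open scoped Classical

/-- A dominating set: every vertex is in `D` or adjacent to a vertex of `D`. -/
def isDominatingSet {V : Type*} (H : SimpleGraph V) (D : Finset V) : Prop :=
  ∀ v : V, v ∈ D ∨ ∃ u ∈ D, H.Adj u v

/-- A total dominating set: every vertex has a neighbor in `D`. -/
def isTotalDominatingSet {V : Type*} (H : SimpleGraph V) (D : Finset V) : Prop :=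
  ∀ v : V, ∃ u ∈ D, H.Adj u v

def isMinimalDominatingSet {V : Type*} (H : SimpleGraph V) (D : Finset V) : Prop :=
  isDominatingSet H D ∧ ∀ D' : Finset V, D' ⊂ D → ¬ isDominatingSet H D'

def isMinimalTotalDominatingSet {V : Type*} (H : SimpleGraph V) (D : Finset V) : Prop :=
  isTotalDominatingSet H D ∧ ∀ D' : Finset V, D' ⊂ D → ¬ isTotalDominatingSet H D'

noncomputable def domNum {V : Type*} (H : SimpleGraph V) : ℕ :=
  sInf {k | ∃ D : Finset V, isDominatingSet H D ∧ D.card = k}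

noncomputable def totalDomNum {V : Type*} (H : SimpleGraph V) : ℕ :=
  sInf {k | ∃ D : Finset V, isTotalDominatingSet H D ∧ D.card = k}

noncomputable def upperDomNum {V : Type*} (H : SimpleGraph V) : ℕ :=
  sSup {k | ∃ D : Finset V, isMinimalDominatingSet H D ∧ D.card = k}

noncomputable def upperTotalDomNum {V : Type*} (H : SimpleGraph V) : ℕ :=
  sSup {k | ∃ D : Finset V, isMinimalTotalDominatingSet H D ∧ D.card = k}

/-- Well (γ-)dominated: all minimal dominating sets have the same size. -/
def WellDominated {V : Type*} (H : SimpleGraph V) : Prop :=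
  ∀ D₁ D₂ : Finset V, isMinimalDominatingSet H D₁ → isMinimalDominatingSet H D₂ →
    D₁.card = D₂.card

/-- Well γ_t-dominated: all minimal total dominating sets have the same size. -/
def WellTotalDominated {V : Type*} (H : SimpleGraph V) : Prop :=
  ∀ D₁ D₂ : Finset V, isMinimalTotalDominatingSet H D₁ → isMinimalTotalDominatingSet H D₂ →
    D₁.card = D₂.card

/-- Restrained dominating set: dominating and every vertex outside `D` has a
neighbor outside `D`. -/
def isRestrainedDominatingSet {V : Type*} (H : SimpleGraph V) (D : Finset V) : Prop :=
  isDominatingSet H D ∧ ∀ v ∉ D, ∃ u ∉ D, H.Adj u v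

/-- Outer-connected dominating set: dominating and the subgraph induced by the
complement of `D` is connected. -/
def isOuterConnectedDominatingSet {V : Type*} (H : SimpleGraph V) (D : Finset V) : Prop :=
  isDominatingSet H D ∧ (H.induce ((↑D : Set V)ᶜ)).Connected

def isTotalRestrainedDominatingSet {V : Type*} (H : SimpleGraph V) (D : Finset V) : Prop :=
  isTotalDominatingSet H D ∧ ∀ v ∉ D, ∃ u ∉ D, H.Adj u v

def isTotalOuterConnectedDominatingSet {V : Type*} (H : SimpleGraph V) (D : Finset V) : Prop :=
  isTotalDominatingSet H D ∧ (H.induce ((↑D : Set V)ᶜ)).Connected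

noncomputable def restrainedDomNum {V : Type*} (H : SimpleGraph V) : ℕ :=
  sInf {k | ∃ D : Finset V, isRestrainedDominatingSet H D ∧ D.card = k}

noncomputable def ocDomNum {V : Type*} (H : SimpleGraph V) : ℕ :=
  sInf {k | ∃ D : Finset V, isOuterConnectedDominatingSet H D ∧ D.card = k}

noncomputable def totalRestrainedDomNum {V : Type*} (H : SimpleGraph V) : ℕ :=
  sInf {k | ∃ D : Finset V, isTotalRestrainedDominatingSet H D ∧ D.card = k}

noncomputable def totalOcDomNum {V : Type*} (H : SimpleGraph V) : ℕ :=
  sInf {k | ∃ D : Finset V, isTotalOuterConnectedDominatingSet H D ∧ D.card = k}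

/-- Paired dominating set: dominating and the induced subgraph on `D` has a
perfect matching. -/
def isPairedDominatingSet {V : Type*} (H : SimpleGraph V) (D : Finset V) : Prop :=
  isDominatingSet H D ∧
    ∃ M : SimpleGraph.Subgraph (H.induce (↑D : Set V)), M.IsPerfectMatching

noncomputable def pairedDomNum {V : Type*} (H : SimpleGraph V) : ℕ :=
  sInf {k | ∃ D : Finset V, isPairedDominatingSet H D ∧ D.card = k}

def isIndependentSet {V : Type*} (H : SimpleGraph V) (D : Finset V) : Prop :=
  ∀ u ∈ D, ∀ v ∈ D, ¬ H.Adj u v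

def isMaximalIndependentSet {V : Type*} (H : SimpleGraph V) (D : Finset V) : Prop :=
  isIndependentSet H D ∧ ∀ D' : Finset V, D ⊂ D' → ¬ isIndependentSet H D'

/-- The independent domination number `i(H)`. -/
noncomputable def indepDomNum {V : Type*} (H : SimpleGraph V) : ℕ :=
  sInf {k | ∃ D : Finset V, isMaximalIndependentSet H D ∧ D.card = k}

/-- The independence number `β₀(H)`. -/
noncomputable def indepNum {V : Type*} (H : SimpleGraph V) : ℕ :=
  sSup {k | ∃ D : Finset V, isIndependentSet H D ∧ D.card = k}

/-- An efficient dominating set: every vertex is dominated by exactly one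
member of `D`. -/
def isEfficientDominatingSet {V : Type*} (H : SimpleGraph V) (D : Finset V) : Prop :=
  ∀ v : V, ∃! u : V, u ∈ D ∧ (u = v ∨ H.Adj u v)

/-- The generalized lexicographic product `G[Φ]` of a graph `G` on `Fin n` and a
family `Φ = (F 0, …, F (n-1))` of pairwise disjoint graphs: the `F i` are induced
subgraphs, and vertices in distinct `F i`, `F j` are adjacent iff `i j ∈ E(G)`. -/
def GLP {n : ℕ} (G : SimpleGraph (Fin n)) {V : Fin n → Type*}
    (F : ∀ i, SimpleGraph (V i)) : SimpleGraph (Σ i, V i) where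
  Adj x y := (x.1 ≠ y.1 ∧ G.Adj x.1 y.1) ∨ ∃ h : x.1 = y.1, (F y.1).Adj (h ▸ x.2) y.2
  symm := ⟨by
    rintro ⟨i, a⟩ ⟨j, b⟩ (⟨hne, hadj⟩ | ⟨h, hadj⟩)
    · exact Or.inl ⟨fun hh => hne hh.symm, hadj.symm⟩
    · dsimp only at h
      subst h
      exact Or.inr ⟨rfl, hadj.symm⟩⟩
  loopless := ⟨by
    rintro ⟨i, a⟩ (⟨hne, _⟩ | ⟨h, hadj⟩)
    · exact hne rfl
    · exact (F i).irrefl hadj⟩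

/-- The number of vertices of `D ∩ V(F i)`. -/
noncomputable def layerCount {n : ℕ} {V : Fin n → Type*} [∀ i, Fintype (V i)]
    (D : Finset (Σ i, V i)) (i : Fin n) : ℕ :=
  (D.filter (fun x => x.1 = i)).card


/-!
Projecting a total dominating set `D` of `G[Φ]` onto its set `P` of occupied indices almost gives
a total dominating set of `G`: an index `j` not dominated by `P` in `G` has its whole fibre
dominated from inside `F j`, which forces two vertices of `D` in that fibre, and the spare one
pays for adding a `G`-neighbour of `j`. Hence `γ_t(G) ≤ γ_t(G[Φ])`; conversely a total dominating
set of a `G`-layer, which is a copy of `G`, already dominates `G[Φ]`, since the fibre over `j` is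
dominated by whatever dominates the layer vertex over `j`.
-/

open Finset

section TotalDomination

variable {A B : Type*} {H : SimpleGraph A} {H' : SimpleGraph B}

theorem totalDomNum_le {D : Finset A} (hD : isTotalDominatingSet H D) :
    totalDomNum H ≤ #D :=
  Nat.sInf_le ⟨D, hD, rfl⟩

theorem exists_isTotalDominatingSet_card_eq_totalDomNum {D : Finset A}
    (hD : isTotalDominatingSet H D) :
    ∃ D' : Finset A, isTotalDominatingSet H D' ∧ #D' = totalDomNum H :=
  Nat.sInf_mem (s := {k | ∃ D : Finset A, isTotalDominatingSet H D ∧ #D = k}) ⟨#D, D, hD, rfl⟩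

theorem exists_adj_of_isTotalDominatingSet {D : Finset A} (hD : isTotalDominatingSet H D)
    (v : A) : ∃ w, H.Adj v w :=
  let ⟨w, _, hw⟩ := hD v
  ⟨w, hw.symm⟩

theorem isTotalDominatingSet_image_iso [DecidableEq B] (e : H ≃g H') {D : Finset A}
    (hD : isTotalDominatingSet H D) : isTotalDominatingSet H' (D.image e) := by
  intro v
  obtain ⟨w, hw, hadj⟩ := hD (e.symm v)
  exact ⟨e w, mem_image_of_mem _ hw, by simpa using e.map_rel_iff.mpr hadj⟩

theorem totalDomNum_congr (e : H ≃g H') : totalDomNum H = totalDomNum H' := by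
  unfold totalDomNum
  congr 1
  ext k
  constructor
  · rintro ⟨D, hD, rfl⟩
    exact ⟨D.image e, isTotalDominatingSet_image_iso e hD, card_image_of_injective _ e.injective⟩
  · rintro ⟨D, hD, rfl⟩
    exact ⟨D.image e.symm, isTotalDominatingSet_image_iso e.symm hD,
      card_image_of_injective _ e.symm.injective⟩

end TotalDomination

theorem Finset.card_image_add_card_le_of_two_le_card_fiber {α β : Type*} [DecidableEq β]
    {D : Finset α} {f : α → β} {S : Finset β} (hS : ∀ b ∈ S, 2 ≤ #(D.filter (f · = b))) :
    #(D.image f) + #S ≤ #D := by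
  have hsub : S ⊆ D.image f := fun b hb => by
    obtain ⟨a, ha⟩ := card_pos.mp (lt_of_lt_of_le two_pos (hS b hb))
    obtain ⟨haD, rfl⟩ := mem_filter.mp ha
    exact mem_image_of_mem f haD
  calc #(D.image f) + #S = ∑ b ∈ D.image f, (1 + if b ∈ S then 1 else 0) := by
        rw [sum_add_distrib, sum_ite_mem, inter_eq_right.mpr hsub]; simp
    _ ≤ ∑ b ∈ D.image f, #(D.filter (f · = b)) := by
        refine sum_le_sum fun b hb => ?_
        split_ifs with hbS
        · exact hS b hbS
        · obtain ⟨a, haD, rfl⟩ := mem_image.mp hb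
          exact card_pos.mpr ⟨a, mem_filter.mpr ⟨haD, rfl⟩⟩
    _ = #D := (card_eq_sum_card_image f D).symm

namespace GLP

variable {n : ℕ} {G : SimpleGraph (Fin n)} {V : Fin n → Type*} {F : ∀ i, SimpleGraph (V i)}

theorem adj_mk_of_adj {i j : Fin n} (h : G.Adj i j) (a : V i) (b : V j) :
    (GLP G F).Adj ⟨i, a⟩ ⟨j, b⟩ :=
  Or.inl ⟨G.ne_of_adj h, h⟩

theorem adj_mk_mk_iff {i : Fin n} {a b : V i} : (GLP G F).Adj ⟨i, a⟩ ⟨i, b⟩ ↔ (F i).Adj a b := by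
  constructor
  · rintro (⟨hne, -⟩ | ⟨_, h⟩)
    · exact absurd rfl hne
    · exact h
  · exact fun h => Or.inr ⟨rfl, h⟩

theorem adj_of_fst_ne {x y : Σ i, V i} (h : (GLP G F).Adj x y) (hne : x.1 ≠ y.1) :
    G.Adj x.1 y.1 := by
  rcases h with ⟨-, h⟩ | ⟨heq, -⟩
  · exact h
  · exact absurd heq hne

theorem adj_section_iff (u : ∀ i, V i) {i j : Fin n} :
    (GLP G F).Adj ⟨i, u i⟩ ⟨j, u j⟩ ↔ G.Adj i j := by
  refine ⟨fun h => ?_, fun h => adj_mk_of_adj h _ _⟩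
  by_cases hij : i = j
  · subst hij
    exact absurd (adj_mk_mk_iff.mp h) (F i).irrefl
  · exact adj_of_fst_ne h hij

def layerIso (G : SimpleGraph (Fin n)) (F : ∀ i, SimpleGraph (V i)) (u : ∀ i, V i) :
    G ≃g (GLP G F).induce (Set.range fun i => (⟨i, u i⟩ : Σ i, V i)) where
  toFun i := ⟨⟨i, u i⟩, i, rfl⟩
  invFun x := x.1.1
  left_inv _ := rfl
  right_inv := by rintro ⟨_, i, rfl⟩; rfl
  map_rel_iff' := adj_section_iff u

theorem isTotalDominatingSet_image_section (σ : ∀ i, V i) {S : Finset (Fin n)}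
    (hS : isTotalDominatingSet G S) :
    isTotalDominatingSet (GLP G F) (S.image fun i => ⟨i, σ i⟩) := by
  rintro ⟨j, y⟩
  obtain ⟨i, hi, hij⟩ := hS j
  exact ⟨⟨i, σ i⟩, mem_image_of_mem _ hi, adj_mk_of_adj hij _ _⟩

theorem exists_mem_adj_of_forall_not_adj {D : Finset (Σ i, V i)}
    (hD : isTotalDominatingSet (GLP G F) D) {j : Fin n}
    (hj : ∀ i ∈ D.image Sigma.fst, ¬ G.Adj i j) (y : V j) :
    ∃ x, (⟨j, x⟩ : Σ i, V i) ∈ D ∧ (F j).Adj x y := by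
  obtain ⟨⟨i, x⟩, hx, hadj⟩ := hD ⟨j, y⟩
  by_cases hij : i = j
  · subst hij
    exact ⟨x, hx, adj_mk_mk_iff.mp hadj⟩
  · exact absurd (adj_of_fst_ne hadj hij) (hj i (mem_image_of_mem _ hx))

theorem exists_isTotalDominatingSet_card_le [∀ i, Nonempty (V i)]
    (hG : ∀ j, ∃ k, G.Adj j k) {D : Finset (Σ i, V i)} (hD : isTotalDominatingSet (GLP G F) D) :
    ∃ S : Finset (Fin n), isTotalDominatingSet G S ∧ #S ≤ #D := by
  choose nbr hnbr using hG
  set P := D.image Sigma.fst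
  set U := univ.filter fun j => ∀ i ∈ P, ¬ G.Adj i j
  have hfiber : ∀ j ∈ U, 2 ≤ #(D.filter (·.1 = j)) := by
    intro j hj
    have hj' := (mem_filter.mp hj).2
    obtain ⟨x, hx, -⟩ := exists_mem_adj_of_forall_not_adj hD hj' (Classical.arbitrary (V j))
    obtain ⟨x', hx', hx'x⟩ := exists_mem_adj_of_forall_not_adj hD hj' x
    refine one_lt_card.mpr ⟨⟨j, x'⟩, mem_filter.mpr ⟨hx', rfl⟩, ⟨j, x⟩,
      mem_filter.mpr ⟨hx, rfl⟩, fun h => (F j).ne_of_adj hx'x ?_⟩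
    exact eq_of_heq (Sigma.mk.inj_iff.mp h).2
  refine ⟨P ∪ U.image nbr, fun v => ?_, ?_⟩
  · by_cases hv : v ∈ U
    · exact ⟨nbr v, mem_union_right _ (mem_image_of_mem _ hv), (hnbr v).symm⟩
    · obtain ⟨i, hi, hiv⟩ : ∃ i ∈ P, G.Adj i v := by simpa [U] using hv
      exact ⟨i, mem_union_left _ hi, hiv⟩
  · calc #(P ∪ U.image nbr) ≤ #P + #U :=
          (card_union_le _ _).trans (Nat.add_le_add_left card_image_le _)
      _ ≤ #D := card_image_add_card_le_of_two_le_card_fiber hfiber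

theorem totalDomNum_eq [∀ i, Nonempty (V i)] {S : Finset (Fin n)}
    (hS : isTotalDominatingSet G S) : totalDomNum (GLP G F) = totalDomNum G := by
  apply le_antisymm
  · obtain ⟨S', hS', hcard⟩ := exists_isTotalDominatingSet_card_eq_totalDomNum hS
    calc totalDomNum (GLP G F)
        ≤ #(S'.image fun i => (⟨i, Classical.arbitrary (V i)⟩ : Σ i, V i)) :=
          totalDomNum_le (isTotalDominatingSet_image_section _ hS')
      _ ≤ #S' := card_image_le
      _ = totalDomNum G := hcard
  · obtain ⟨D, hD, hcard⟩ := exists_isTotalDominatingSet_card_eq_totalDomNum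
      (isTotalDominatingSet_image_section (F := F) (Classical.arbitrary _) hS)
    obtain ⟨S', hS', hle⟩ :=
      exists_isTotalDominatingSet_card_le (exists_adj_of_isTotalDominatingSet hS) hD
    exact hcard ▸ (totalDomNum_le hS').trans hle

end GLP

theorem stmt_0_general {n : ℕ} (G : SimpleGraph (Fin n))
    (V : Fin n → Type) (F : ∀ i, SimpleGraph (V i))
    (u : ∀ i, V i)
    (I : Finset ↥(Set.range fun i => (⟨i, u i⟩ : Σ i, V i)))
    (hI : isTotalDominatingSet
        ((GLP G F).induce (Set.range fun i => (⟨i, u i⟩ : Σ i, V i))) I)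
    (hImin : I.card = totalDomNum
        ((GLP G F).induce (Set.range fun i => (⟨i, u i⟩ : Σ i, V i)))) :
    (isTotalDominatingSet (GLP G F) (I.image Subtype.val) ∧
      (I.image Subtype.val).card = totalDomNum (GLP G F)) ∧
    totalDomNum G = totalDomNum (GLP G F) := by
  have : ∀ i, Nonempty (V i) := fun i => ⟨u i⟩
  let e := GLP.layerIso G F u
  have hS : isTotalDominatingSet G (I.image e.symm) := isTotalDominatingSet_image_iso e.symm hI
  have heq : totalDomNum G = totalDomNum (GLP G F) := (GLP.totalDomNum_eq hS).symm
  have himage : I.image Subtype.val = (I.image e.symm).image fun i => ⟨i, u i⟩ := by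
    rw [image_image]
    exact image_congr fun x _ => by obtain ⟨_, i, rfl⟩ := x; rfl
  refine ⟨⟨himage ▸ GLP.isTotalDominatingSet_image_section u hS, ?_⟩, heq⟩
  rw [card_image_of_injective _ Subtype.val_injective, hImin, ← totalDomNum_congr e, heq]

/-- If `I` is a minimum total dominating set of (the subgraph induced by) some
`G`-layer of `G[Φ]`, then `I` is a minimum total dominating set of `G[Φ]`;
in particular `γ_t(G) = γ_t(G[Φ])`. -/
theorem stmt_0 {n : ℕ} (hn : 2 ≤ n) (G : SimpleGraph (Fin n)) (hG : G.Connected)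
    (V : Fin n → Type) [∀ i, Fintype (V i)] (F : ∀ i, SimpleGraph (V i))
    (u : ∀ i, V i)
    (I : Finset ↥(Set.range fun i => (⟨i, u i⟩ : Σ i, V i)))
    (hI : isTotalDominatingSet
        ((GLP G F).induce (Set.range fun i => (⟨i, u i⟩ : Σ i, V i))) I)
    (hImin : I.card = totalDomNum
        ((GLP G F).induce (Set.range fun i => (⟨i, u i⟩ : Σ i, V i)))) :
    (isTotalDominatingSet (GLP G F) (I.image Subtype.val) ∧
      (I.image Subtype.val).card = totalDomNum (GLP G F)) ∧
    totalDomNum G = totalDomNum (GLP G F) :=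
  stmt_0_general G V F u I hI hImin
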